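/- If ρ ≥ π, then there exists v ∈ (−π/2, π/2) such that the point S_ρ(u, v) = γ_{u,v}(ρ) is the same for all u ∈ ℝ; in particular the sphere parametrization map (u, v) ↦ S_ρ(u, v) is not injective on (−π, π] × (−π/2, π/2). (This is the 'self-intersection' direction of Proposition 2.3.) -/

import Mathlib

open Real

/-- The geodesic curves of `S² × ℝ` starting at `(1,0,0)` in the Euclidean model,
with longitude `u`, altitude `v` and arc-length parameter `τ` (equation (2.2)). -/
noncomputable def geo (u v τ : ℝ) : EuclideanSpace ℝ (Fin 3) :=
  (WithLp.equiv 2 (Fin 3 → ℝ)).symm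
    ![Real.exp (τ * Real.sin v) * Real.cos (τ * Real.cos v),
      Real.exp (τ * Real.sin v) * Real.sin (τ * Real.cos v) * Real.cos u,
      Real.exp (τ * Real.sin v) * Real.sin (τ * Real.cos v) * Real.sin u]

/-! The geodesics of altitude `v` all pass through the point `γ(τ)` at the first time `τ` with
`τ cos v = π`, because the longitude `u` enters `γ_{u,v}(τ)` only through the factor
`sin (τ cos v)`. For `ρ ≥ π` the altitude `v = arccos (π / ρ)` lies in `(−π/2, π/2)` and
satisfies `ρ cos v = π`, so `S_ρ(·, v)` is constant and `S_ρ(0, v) = S_ρ(π, v)`. -/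

theorem geo_eq_of_sin_mul_cos_eq_zero {v τ : ℝ} (h : sin (τ * cos v) = 0) (u₁ u₂ : ℝ) :
    geo u₁ v τ = geo u₂ v τ := by
  ext i
  fin_cases i <;> simp [geo, h]

theorem exists_mem_Ioo_mul_cos_eq {a ρ : ℝ} (ha : 0 < a) (haρ : a ≤ ρ) :
    ∃ v ∈ Set.Ioo (-(π / 2)) (π / 2), ρ * cos v = a := by
  have hρ : 0 < ρ := ha.trans_le haρ
  have hdiv_pos : 0 < a / ρ := div_pos ha hρ
  have hdiv_le : a / ρ ≤ 1 := (div_le_one hρ).2 haρ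
  refine ⟨arccos (a / ρ), ⟨?_, arccos_lt_pi_div_two.2 hdiv_pos⟩, ?_⟩
  · linarith [arccos_nonneg (a / ρ), pi_pos]
  · rw [cos_arccos (by linarith) hdiv_le]
    field_simp

theorem sphere_selfintersection (ρ : ℝ) (hρ : ρ ≥ π) :
    (∃ v ∈ Set.Ioo (-(π / 2)) (π / 2), ∀ u₁ u₂ : ℝ, geo u₁ v ρ = geo u₂ v ρ) ∧
    ¬ Set.InjOn (fun p : ℝ × ℝ => geo p.1 p.2 ρ)
        (Set.Ioc (-π) π ×ˢ Set.Ioo (-(π / 2)) (π / 2)) := by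
  obtain ⟨v, hv, hρv⟩ := exists_mem_Ioo_mul_cos_eq pi_pos hρ
  have hconst : ∀ u₁ u₂ : ℝ, geo u₁ v ρ = geo u₂ v ρ :=
    geo_eq_of_sin_mul_cos_eq_zero (by rw [hρv, sin_pi])
  refine ⟨⟨v, hv, hconst⟩, fun hinj => ?_⟩
  have hzero : ((0 : ℝ), v) ∈ Set.Ioc (-π) π ×ˢ Set.Ioo (-(π / 2)) (π / 2) :=
    ⟨⟨by linarith [pi_pos], pi_pos.le⟩, hv⟩
  have hpi : (π, v) ∈ Set.Ioc (-π) π ×ˢ Set.Ioo (-(π / 2)) (π / 2) :=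
    ⟨⟨by linarith [pi_pos], le_rfl⟩, hv⟩
  exact pi_ne_zero (congrArg Prod.fst (hinj hzero hpi (hconst 0 π))).symm
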